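/- Any w = [w1, w2, w3] ∈ W1 minimizing the worst-context population exponential loss max{ E_{P_{c1}}[exp(−y·wᵀx)], E_{P_{c2}}[exp(−y·wᵀx)] } over W1 satisfies w3 = 0 and w1, w2 ∈ span{μ}; that is, the conDRO solution lies in the two-dimensional subspace spanned by [μ, 0_d, 0_d] and [0_d, μ, 0_d]. -/

import Mathlib

open MeasureTheory ProbabilityTheory Real Filter
open scoped ENNReal NNReal

noncomputable section

/-- Complementary error function `erfc x = (2/√π) ∫_x^∞ e^{−t²} dt`. -/
def erfc (x : ℝ) : ℝ := 2 / Real.sqrt Real.pi * ∫ t in Set.Ioi x, Real.exp (-t ^ 2)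

/-- A vector in `ℝ^d`. -/
abbrev Vec (d : ℕ) := Fin d → ℝ

/-- The input space `ℝ^{3d}`, viewed as three blocks `x = [x1, x2, x3]`. -/
abbrev Inp (d : ℕ) := Vec d × Vec d × Vec d

/-- Euclidean dot product on `ℝ^d`. -/
def dot {d : ℕ} (v w : Vec d) : ℝ := ∑ i, v i * w i

/-- Euclidean norm on `ℝ^d`. -/
def vnorm {d : ℕ} (v : Vec d) : ℝ := Real.sqrt (∑ i, v i ^ 2)

/-- Euclidean norm on the full input space `ℝ^{3d}`. -/
def xnorm {d : ℕ} (x : Inp d) : ℝ :=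
  Real.sqrt ((∑ i, x.1 i ^ 2) + (∑ i, x.2.1 i ^ 2) + ∑ i, x.2.2 i ^ 2)

/-- Value `wᵀx` of the linear predictor `w` at input `x`. -/
def pred {d : ℕ} (w x : Inp d) : ℝ := dot w.1 x.1 + dot w.2.1 x.2.1 + dot w.2.2 x.2.2

/-- Isotropic Gaussian `N(m, v·I_d)` on `ℝ^d` (product of coordinate Gaussians). -/
def gaussVec (d : ℕ) (m : Vec d) (v : ℝ) : Measure (Vec d) :=
  Measure.pi fun i => gaussianReal (m i) (Real.toNNReal v)

/-- Conditional law of `x` given the label `y` in context `c1`: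
`x1 ~ N(μy, σ²I)`, `x2 ~ N(μy, γσ²I)`, `x3 ~ N(μ, η²I)`, independent blocks. -/
def condX1 (d : ℕ) (μ : Vec d) (σ γ η : ℝ) (y : ℝ) : Measure (Inp d) :=
  (gaussVec d (fun i => μ i * y) (σ ^ 2)).prod
    ((gaussVec d (fun i => μ i * y) (γ * σ ^ 2)).prod
      (gaussVec d μ (η ^ 2)))

/-- Conditional law of `x` given the label `y` in context `c2`:
`x1 ~ N(μy, σ²I)`, `x2 ~ N(−μy, (σ²/γ)I)`, `x3 ~ N(−μ, η²I)`, independent blocks. -/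
def condX2 (d : ℕ) (μ : Vec d) (σ γ η : ℝ) (y : ℝ) : Measure (Inp d) :=
  (gaussVec d (fun i => μ i * y) (σ ^ 2)).prod
    ((gaussVec d (fun i => -μ i * y) (σ ^ 2 / γ)).prod
      (gaussVec d (fun i => -μ i) (η ^ 2)))

/-- Joint law of `(x, y)`: `y` uniform on `{−1, 1}`, then `x ~ cond y`. -/
def jointOf {d : ℕ} (cond : ℝ → Measure (Inp d)) : Measure (Inp d × ℝ) :=
  (2 : ℝ≥0∞)⁻¹ • (cond 1).prod (Measure.dirac (1 : ℝ))
    + (2 : ℝ≥0∞)⁻¹ • (cond (-1)).prod (Measure.dirac (-1 : ℝ))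

/-- The context-`c1` distribution over `(x, y)`. -/
def Pc1 (d : ℕ) (μ : Vec d) (σ γ η : ℝ) : Measure (Inp d × ℝ) :=
  jointOf (condX1 d μ σ γ η)

/-- The context-`c2` distribution over `(x, y)`. -/
def Pc2 (d : ℕ) (μ : Vec d) (σ γ η : ℝ) : Measure (Inp d × ℝ) :=
  jointOf (condX2 d μ σ γ η)

/-- Accuracy `Acc_P(w) = P(sign(wᵀx) = y)` of linear predictor `w` under joint law `P`. -/
def AccP {d : ℕ} (P : Measure (Inp d × ℝ)) (w : Inp d) : ℝ :=
  (P {p | Real.sign (pred w p.1) = p.2}).toReal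

/-- Norm-bounded linear predictors `W1 = {w ∈ ℝ^{3d} : ‖w‖₂ ≤ 1}`. -/
def W1 (d : ℕ) : Set (Inp d) := {w | xnorm w ≤ 1}

/-- Population exponential loss `E_P[exp(−y·wᵀx)]`. -/
def expLoss {d : ℕ} (P : Measure (Inp d × ℝ)) (w : Inp d) : ℝ :=
  ∫ p, Real.exp (-(p.2 * pred w p.1)) ∂P

end

/-!
For a block Gaussian `x ~ N(m, diag(v₁I, v₂I, v₃I))` one has
`E[exp(s·wᵀx)] = exp(s·wᵀm + s²·wᵀΣw/2)`, so averaging over `y = ±1` gives the closed forms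
`exp(-(w₁ + w₂)ᵀμ + wᵀΣ₁w/2)·cosh(w₃ᵀμ)` and `exp((w₂ - w₁)ᵀμ + wᵀΣ₂w/2)·cosh(w₃ᵀμ)`
for the two context losses. Replacing `w₁, w₂` by their orthogonal projections onto `span{μ}`
and `w₃` by `0` keeps the linear terms, does not increase `‖w‖`, cannot increase the `cosh`
factor, and strictly decreases both quadratic forms unless `w` already has this shape. Hence a
minimiser of the worst-context loss must have it.
-/

section

variable {d : ℕ}

instance isProbabilityMeasure_gaussVec (m : Vec d) (v : ℝ) :
    IsProbabilityMeasure (gaussVec d m v) := by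
  unfold gaussVec; infer_instance

lemma dot_smul_left (c : ℝ) (v u : Vec d) : dot (c • v) u = c * dot v u := by
  simp only [dot, Pi.smul_apply, smul_eq_mul, Finset.mul_sum, mul_assoc]

lemma dot_zero_left (u : Vec d) : dot 0 u = 0 := by
  simp [dot]

lemma exp_dot (t x : Vec d) : exp (dot t x) = ∏ i, exp (t i * x i) :=
  Real.exp_sum _ _

lemma integral_exp_mul_gaussianReal (m t : ℝ) {v : ℝ} (hv : 0 ≤ v) :
    ∫ x, exp (t * x) ∂gaussianReal m v.toNNReal = exp (m * t + v * t ^ 2 / 2) := by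
  simpa [mgf, Real.coe_toNNReal _ hv] using
    congrFun (mgf_id_gaussianReal (μ := m) (v := v.toNNReal)) t

lemma integral_exp_dot_gaussVec (m t : Vec d) {v : ℝ} (hv : 0 ≤ v) :
    ∫ x, exp (dot t x) ∂gaussVec d m v = exp (dot t m + v * (∑ i, t i ^ 2) / 2) := by
  simp_rw [exp_dot, gaussVec]
  rw [integral_fintype_prod_eq_prod (fun i x => exp (t i * x))]
  simp_rw [integral_exp_mul_gaussianReal _ _ hv, ← Real.exp_sum]
  simp only [dot, Finset.sum_add_distrib, Finset.mul_sum, Finset.sum_div, mul_comm]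

lemma integrable_exp_dot_gaussVec (m t : Vec d) (v : ℝ) :
    Integrable (fun x => exp (dot t x)) (gaussVec d m v) := by
  simp_rw [exp_dot, gaussVec]
  exact Integrable.fintype_prod_dep fun i => integrable_exp_mul_gaussianReal (t i)

section TripleProduct

variable {α β γ : Type*} [MeasurableSpace α] [MeasurableSpace β] [MeasurableSpace γ]
  {ν₁ : Measure α} {ν₂ : Measure β} {ν₃ : Measure γ}

omit [MeasurableSpace α] [MeasurableSpace β] [MeasurableSpace γ] in
lemma exp_add_add_prod (f : α → ℝ) (g : β → ℝ) (h : γ → ℝ) (x : α × β × γ) :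
    exp (f x.1 + g x.2.1 + h x.2.2) = exp (f x.1) * (exp (g x.2.1) * exp (h x.2.2)) := by
  rw [← exp_add, ← exp_add, add_assoc]

lemma integral_exp_add_add_prod [SFinite ν₁] [SFinite ν₂] [SFinite ν₃]
    (f : α → ℝ) (g : β → ℝ) (h : γ → ℝ) :
    ∫ x, exp (f x.1 + g x.2.1 + h x.2.2) ∂ν₁.prod (ν₂.prod ν₃)
      = (∫ x, exp (f x) ∂ν₁) * ((∫ x, exp (g x) ∂ν₂) * ∫ x, exp (h x) ∂ν₃) := by
  simp_rw [exp_add_add_prod]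
  rw [integral_prod_mul (fun x => exp (f x)) (fun y : β × γ => exp (g y.1) * exp (h y.2)),
    integral_prod_mul (fun x => exp (g x)) (fun x => exp (h x))]

lemma integrable_exp_add_add_prod {f : α → ℝ} {g : β → ℝ} {h : γ → ℝ}
    (hf : Integrable (fun x => exp (f x)) ν₁) (hg : Integrable (fun x => exp (g x)) ν₂)
    (hh : Integrable (fun x => exp (h x)) ν₃) :
    Integrable (fun x => exp (f x.1 + g x.2.1 + h x.2.2)) (ν₁.prod (ν₂.prod ν₃)) := by
  simp_rw [exp_add_add_prod]
  exact hf.mul_prod (hg.mul_prod hh)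

end TripleProduct

def predVariance (v₁ v₂ v₃ : ℝ) (w : Inp d) : ℝ :=
  v₁ * ∑ i, w.1 i ^ 2 + v₂ * ∑ i, w.2.1 i ^ 2 + v₃ * ∑ i, w.2.2 i ^ 2

lemma exp_smul_pred (s : ℝ) (w x : Inp d) :
    exp (s * pred w x)
      = exp (dot (s • w.1) x.1 + dot (s • w.2.1) x.2.1 + dot (s • w.2.2) x.2.2) := by
  simp only [pred, dot_smul_left]; ring_nf

lemma sum_sq_smul (s : ℝ) (v : Vec d) : ∑ i, (s • v) i ^ 2 = s ^ 2 * ∑ i, v i ^ 2 := by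
  simp only [Pi.smul_apply, smul_eq_mul, mul_pow, Finset.mul_sum]

lemma integral_exp_smul_pred (s : ℝ) (w : Inp d) (m₁ m₂ m₃ : Vec d) {v₁ v₂ v₃ : ℝ}
    (h₁ : 0 ≤ v₁) (h₂ : 0 ≤ v₂) (h₃ : 0 ≤ v₃) :
    ∫ x, exp (s * pred w x)
        ∂(gaussVec d m₁ v₁).prod ((gaussVec d m₂ v₂).prod (gaussVec d m₃ v₃))
      = exp (s * pred w (m₁, m₂, m₃) + s ^ 2 * predVariance v₁ v₂ v₃ w / 2) := by
  simp_rw [exp_smul_pred]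
  rw [integral_exp_add_add_prod, integral_exp_dot_gaussVec _ _ h₁,
    integral_exp_dot_gaussVec _ _ h₂, integral_exp_dot_gaussVec _ _ h₃, ← exp_add, ← exp_add]
  simp only [pred, predVariance, dot_smul_left, sum_sq_smul]
  ring_nf

lemma integrable_exp_smul_pred (s : ℝ) (w : Inp d) (m₁ m₂ m₃ : Vec d) (v₁ v₂ v₃ : ℝ) :
    Integrable (fun x => exp (s * pred w x))
      ((gaussVec d m₁ v₁).prod ((gaussVec d m₂ v₂).prod (gaussVec d m₃ v₃))) := by
  simp_rw [exp_smul_pred]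
  exact integrable_exp_add_add_prod (integrable_exp_dot_gaussVec _ _ _)
    (integrable_exp_dot_gaussVec _ _ _) (integrable_exp_dot_gaussVec _ _ _)

lemma integral_jointOf (cond : ℝ → Measure (Inp d))
    [SFinite (cond 1)] [SFinite (cond (-1))] {f : Inp d × ℝ → ℝ} (hf : Measurable f)
    (h₁ : Integrable (fun x => f (x, 1)) (cond 1))
    (h₂ : Integrable (fun x => f (x, -1)) (cond (-1))) :
    ∫ p, f p ∂jointOf cond = ((∫ x, f (x, 1) ∂cond 1) + ∫ x, f (x, -1) ∂cond (-1)) / 2 := by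
  have hg₁ : Measurable fun x : Inp d => (x, (1 : ℝ)) := measurable_prodMk_right
  have hg₂ : Measurable fun x : Inp d => (x, (-1 : ℝ)) := measurable_prodMk_right
  have hi₁ : Integrable f ((cond 1).map fun x => (x, 1)) :=
    (integrable_map_measure hf.aestronglyMeasurable hg₁.aemeasurable).2 h₁
  have hi₂ : Integrable f ((cond (-1)).map fun x => (x, -1)) :=
    (integrable_map_measure hf.aestronglyMeasurable hg₂.aemeasurable).2 h₂
  have hne : (2⁻¹ : ENNReal) ≠ ⊤ := by simp
  rw [jointOf, Measure.prod_dirac, Measure.prod_dirac,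
    integral_add_measure (hi₁.smul_measure hne) (hi₂.smul_measure hne),
    integral_smul_measure, integral_smul_measure,
    integral_map hg₁.aemeasurable hf.aestronglyMeasurable,
    integral_map hg₂.aemeasurable hf.aestronglyMeasurable]
  simp only [ENNReal.toReal_inv, ENNReal.toReal_ofNat, smul_eq_mul]
  ring

lemma measurable_pred (w : Inp d) : Measurable (pred w) := by
  unfold pred dot; fun_prop

-- The factors `-1` and `1` are kept so that `integral_exp_smul_pred` applies with `s = ∓1`.
lemma expLoss_jointOf (cond : ℝ → Measure (Inp d))
    [SFinite (cond 1)] [SFinite (cond (-1))] (w : Inp d)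
    (h₁ : Integrable (fun x => exp (-1 * pred w x)) (cond 1))
    (h₂ : Integrable (fun x => exp (1 * pred w x)) (cond (-1))) :
    expLoss (jointOf cond) w
      = ((∫ x, exp (-1 * pred w x) ∂cond 1) + ∫ x, exp (1 * pred w x) ∂cond (-1)) / 2 := by
  have hf : Measurable fun p : Inp d × ℝ => exp (-(p.2 * pred w p.1)) := by
    have := measurable_pred w; fun_prop
  simpa [expLoss] using integral_jointOf cond hf (by simpa using h₁) (by simpa using h₂)

instance isProbabilityMeasure_condX1 (μ : Vec d) (σ γ η y : ℝ) :
    IsProbabilityMeasure (condX1 d μ σ γ η y) := by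
  unfold condX1; infer_instance

instance isProbabilityMeasure_condX2 (μ : Vec d) (σ γ η y : ℝ) :
    IsProbabilityMeasure (condX2 d μ σ γ η y) := by
  unfold condX2; infer_instance

lemma expLoss_Pc1 (μ : Vec d) (σ : ℝ) {γ : ℝ} (η : ℝ) (hγ : 0 ≤ γ) (w : Inp d) :
    expLoss (Pc1 d μ σ γ η) w
      = exp (-(dot w.1 μ + dot w.2.1 μ) + predVariance (σ ^ 2) (γ * σ ^ 2) (η ^ 2) w / 2)
        * cosh (dot w.2.2 μ) := by
  rw [Pc1, expLoss_jointOf _ _ (integrable_exp_smul_pred ..) (integrable_exp_smul_pred ..)]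
  simp only [condX1]
  rw [integral_exp_smul_pred _ _ _ _ _ (by positivity) (by positivity) (by positivity),
    integral_exp_smul_pred _ _ _ _ _ (by positivity) (by positivity) (by positivity), cosh_eq]
  simp only [pred, dot, mul_one, mul_neg, Finset.sum_neg_distrib]
  rw [← mul_div_assoc, mul_add (exp _), ← exp_add, ← exp_add]
  ring_nf

lemma expLoss_Pc2 (μ : Vec d) (σ : ℝ) {γ : ℝ} (η : ℝ) (hγ : 0 ≤ γ) (w : Inp d) :
    expLoss (Pc2 d μ σ γ η) w
      = exp (-dot w.1 μ + dot w.2.1 μ + predVariance (σ ^ 2) (σ ^ 2 / γ) (η ^ 2) w / 2)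
        * cosh (dot w.2.2 μ) := by
  rw [Pc2, expLoss_jointOf _ _ (integrable_exp_smul_pred ..) (integrable_exp_smul_pred ..)]
  simp only [condX2]
  rw [integral_exp_smul_pred _ _ _ _ _ (by positivity) (by positivity) (by positivity),
    integral_exp_smul_pred _ _ _ _ _ (by positivity) (by positivity) (by positivity), cosh_eq]
  simp only [pred, dot, mul_one, mul_neg, neg_mul, Finset.sum_neg_distrib]
  rw [← mul_div_assoc, mul_add (exp _), ← exp_add, ← exp_add]
  ring_nf

lemma sum_sq_pos_iff {v : Vec d} : 0 < ∑ i, v i ^ 2 ↔ v ≠ 0 := by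
  rw [(Finset.sum_nonneg fun i _ => sq_nonneg (v i)).lt_iff_ne', Ne, Ne,
    Finset.sum_eq_zero_iff_of_nonneg fun i _ => sq_nonneg (v i), funext_iff]
  simp

noncomputable def projLine (u v : Vec d) : Vec d := (dot v u / ∑ i, u i ^ 2) • u

lemma dot_projLine {u : Vec d} (hu : u ≠ 0) (v : Vec d) : dot (projLine u v) u = dot v u := by
  have hS : ∑ i, u i ^ 2 ≠ 0 := (sum_sq_pos_iff.2 hu).ne'
  rw [projLine, dot_smul_left, show dot u u = ∑ i, u i ^ 2 by simp only [dot, sq]]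
  field_simp

lemma sum_sq_projLine_add_sum_sq_sub (u v : Vec d) :
    ∑ i, projLine u v i ^ 2 + ∑ i, (v - projLine u v) i ^ 2 = ∑ i, v i ^ 2 := by
  set S := ∑ i, u i ^ 2
  set c := dot v u / S
  have hc : c * (c * S - dot v u) = 0 := by
    rcases eq_or_ne S 0 with hS | hS
    · simp [c, hS]
    · simp [c, div_mul_cancel₀ _ hS]
  have hi : ∀ i, (c * u i) ^ 2 + (v i - c * u i) ^ 2
      = v i ^ 2 + 2 * c * (c * u i ^ 2 - v i * u i) := fun i => by ring
  simp only [projLine, Pi.sub_apply, Pi.smul_apply, smul_eq_mul]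
  rw [← Finset.sum_add_distrib, Finset.sum_congr rfl fun i _ => hi i, Finset.sum_add_distrib,
    ← Finset.mul_sum, Finset.sum_sub_distrib, ← Finset.mul_sum]
  change _ + 2 * c * (c * S - dot v u) = _
  rw [mul_assoc, hc, mul_zero, add_zero]

noncomputable def projPlane (u : Vec d) (w : Inp d) : Inp d :=
  (projLine u w.1, projLine u w.2.1, 0)

lemma predVariance_nonneg {v₁ v₂ v₃ : ℝ} (h₁ : 0 ≤ v₁) (h₂ : 0 ≤ v₂) (h₃ : 0 ≤ v₃)
    (w : Inp d) :
    0 ≤ predVariance v₁ v₂ v₃ w := by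
  unfold predVariance; positivity

lemma predVariance_pos {v₁ v₂ v₃ : ℝ} (h₁ : 0 < v₁) (h₂ : 0 < v₂) (h₃ : 0 < v₃) {w : Inp d}
    (hw : w ≠ 0) : 0 < predVariance v₁ v₂ v₃ w := by
  unfold predVariance
  have n₁ : 0 ≤ v₁ * ∑ i, w.1 i ^ 2 := by positivity
  have n₂ : 0 ≤ v₂ * ∑ i, w.2.1 i ^ 2 := by positivity
  have n₃ : 0 ≤ v₃ * ∑ i, w.2.2 i ^ 2 := by positivity
  obtain h | h | h : w.1 ≠ 0 ∨ w.2.1 ≠ 0 ∨ w.2.2 ≠ 0 := by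
    by_contra! h
    exact hw (Prod.ext h.1 (Prod.ext h.2.1 h.2.2))
  · linarith [mul_pos h₁ (sum_sq_pos_iff.2 h)]
  · linarith [mul_pos h₂ (sum_sq_pos_iff.2 h)]
  · linarith [mul_pos h₃ (sum_sq_pos_iff.2 h)]

lemma predVariance_projPlane_add_sub (v₁ v₂ v₃ : ℝ) (u : Vec d) (w : Inp d) :
    predVariance v₁ v₂ v₃ (projPlane u w) + predVariance v₁ v₂ v₃ (w - projPlane u w)
      = predVariance v₁ v₂ v₃ w := by
  simp only [predVariance, projPlane, Prod.fst_sub, Prod.snd_sub, sub_zero, Pi.zero_apply,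
    zero_pow two_ne_zero, Finset.sum_const_zero, mul_zero, add_zero]
  rw [← sum_sq_projLine_add_sum_sq_sub u w.1, ← sum_sq_projLine_add_sum_sq_sub u w.2.1]
  ring_nf

lemma predVariance_projPlane_le {v₁ v₂ v₃ : ℝ} (h₁ : 0 ≤ v₁) (h₂ : 0 ≤ v₂) (h₃ : 0 ≤ v₃)
    (u : Vec d) (w : Inp d) :
    predVariance v₁ v₂ v₃ (projPlane u w) ≤ predVariance v₁ v₂ v₃ w := by
  rw [← predVariance_projPlane_add_sub v₁ v₂ v₃ u w]
  linarith [predVariance_nonneg h₁ h₂ h₃ (w - projPlane u w)]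

lemma predVariance_projPlane_lt {v₁ v₂ v₃ : ℝ} (h₁ : 0 < v₁) (h₂ : 0 < v₂) (h₃ : 0 < v₃)
    {u : Vec d} {w : Inp d} (hw : projPlane u w ≠ w) :
    predVariance v₁ v₂ v₃ (projPlane u w) < predVariance v₁ v₂ v₃ w := by
  rw [← predVariance_projPlane_add_sub v₁ v₂ v₃ u w]
  linarith [predVariance_pos h₁ h₂ h₃ (sub_ne_zero.2 hw.symm)]

lemma xnorm_eq_sqrt_predVariance (w : Inp d) : xnorm w = √(predVariance 1 1 1 w) := by
  simp only [xnorm, predVariance, one_mul]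

lemma xnorm_projPlane_le (u : Vec d) (w : Inp d) : xnorm (projPlane u w) ≤ xnorm w := by
  rw [xnorm_eq_sqrt_predVariance, xnorm_eq_sqrt_predVariance]
  exact sqrt_le_sqrt (predVariance_projPlane_le zero_le_one zero_le_one zero_le_one u w)

lemma exp_add_half_lt_mul_cosh {a q q' : ℝ} (t : ℝ) (h : q' < q) :
    exp (a + q' / 2) < exp (a + q / 2) * cosh t :=
  calc exp (a + q' / 2) < exp (a + q / 2) := exp_lt_exp.2 (by linarith)
    _ ≤ exp (a + q / 2) * cosh t := le_mul_of_one_le_right (exp_pos _).le (one_le_cosh t)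

section Contexts

variable {μ : Vec d} {σ γ η : ℝ} {w : Inp d}

lemma expLoss_Pc1_projPlane_lt (hμ : μ ≠ 0) (hσ : σ ≠ 0) (hγ : 0 < γ) (hη : η ≠ 0)
    (hw : projPlane μ w ≠ w) :
    expLoss (Pc1 d μ σ γ η) (projPlane μ w) < expLoss (Pc1 d μ σ γ η) w := by
  rw [expLoss_Pc1 _ _ _ hγ.le, expLoss_Pc1 _ _ _ hγ.le]
  simp only [projPlane, dot_projLine hμ, dot_zero_left, cosh_zero, mul_one]
  exact exp_add_half_lt_mul_cosh _ (predVariance_projPlane_lt (by positivity) (by positivity)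
    (by positivity) hw)

lemma expLoss_Pc2_projPlane_lt (hμ : μ ≠ 0) (hσ : σ ≠ 0) (hγ : 0 < γ) (hη : η ≠ 0)
    (hw : projPlane μ w ≠ w) :
    expLoss (Pc2 d μ σ γ η) (projPlane μ w) < expLoss (Pc2 d μ σ γ η) w := by
  rw [expLoss_Pc2 _ _ _ hγ.le, expLoss_Pc2 _ _ _ hγ.le]
  simp only [projPlane, dot_projLine hμ, dot_zero_left, cosh_zero, mul_one]
  exact exp_add_half_lt_mul_cosh _ (predVariance_projPlane_lt (by positivity) (by positivity)
    (by positivity) hw)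

end Contexts

end

theorem condro_solution_in_subspace_general (d : ℕ) (μ : Vec d) (hμ : μ ≠ 0)
    (σ γ η : ℝ) (hσ : 0 < σ) (hγ : 0 < γ) (hη : 0 < η)
    (w : Inp d) (hmem : w ∈ W1 d)
    (hmin : ∀ w' ∈ W1 d,
      max (expLoss (Pc1 d μ σ γ η) w) (expLoss (Pc2 d μ σ γ η) w)
        ≤ max (expLoss (Pc1 d μ σ γ η) w') (expLoss (Pc2 d μ σ γ η) w')) :
    w.2.2 = 0 ∧ (∃ a : ℝ, w.1 = a • μ) ∧ (∃ b : ℝ, w.2.1 = b • μ) := by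
  have hfix : projPlane μ w = w := by
    by_contra hne
    have hmem' : projPlane μ w ∈ W1 d := (xnorm_projPlane_le μ w).trans hmem
    exact (hmin _ hmem').not_gt (max_lt_max
      (expLoss_Pc1_projPlane_lt hμ hσ.ne' hγ hη.ne' hne)
      (expLoss_Pc2_projPlane_lt hμ hσ.ne' hγ hη.ne' hne))
  rw [← hfix]
  exact ⟨rfl, ⟨_, rfl⟩, ⟨_, rfl⟩⟩

theorem condro_solution_in_subspace (d : ℕ) (hd : 1 ≤ d) (μ : Vec d) (hμ : μ ≠ 0)
    (σ γ η : ℝ) (hσ : 0 < σ) (hγ : 0 < γ) (hη : 0 < η)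
    (w : Inp d) (hmem : w ∈ W1 d)
    (hmin : ∀ w' ∈ W1 d,
      max (expLoss (Pc1 d μ σ γ η) w) (expLoss (Pc2 d μ σ γ η) w)
        ≤ max (expLoss (Pc1 d μ σ γ η) w') (expLoss (Pc2 d μ σ γ η) w')) :
    w.2.2 = 0 ∧ (∃ a : ℝ, w.1 = a • μ) ∧ (∃ b : ℝ, w.2.1 = b • μ) :=
  condro_solution_in_subspace_general d μ hμ σ γ η hσ hγ hη w hmem hmin
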